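/- arXiv:2306.10428 — 2 statements merged into one kernel-verified Lean document; each statement's English description precedes it below -/
import Mathlib

section
/- There is a universal constant C > 0 such that for every ε > 0, β ∈ (0,1), and integers d ≥ 1, K ≥ 1, T ≥ 1 (both K and T known to the algorithm), there exists an ε-differentially private (user level) continual-observation set-cardinality mechanism over users [d] with stream length T such that on every set-cardinality stream of length T with total update count at most K, the mechanism has error at most C · min( d, K, √( ε^{-1} · K · log(T/β) ) ) at all time steps with probability at least 1 − β. -/
/-!
If `min d K ≤ s := √(ε⁻¹ K log₂(T / β))`, the constant output `0` is private and its error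
`|D_t| ≤ min d K` is within the bound. Otherwise run the sparse vector technique on the counts
`|D_t|`: release a fresh noisy count only when the noisy distance between the current count and
the last release exceeds a threshold `r ≈ 100 s`. Each release consumes about `r / 2` of the total
variation of the counts, which is at most `K`, so a budget of `J ≈ 2 K / r` releases suffices.
Neighbouring streams have counts differing by at most one, and an injective shift of the noise
vector of `ℓ¹`-size `4 J` makes the run on one stream replay the run on the other; so discrete
Laplace noise with `q = exp (-ε / 4J)` on every query, threshold and release gives `ε`-privacy.
With probability `1 - β` all `T + 2 J` noise coordinates are at most `B ≈ 12 J log₂(T/β) / ε`,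
which is `O(s)`, and then the error is below `r + 2 B = O(s)`.
-/

open MeasureTheory

/-- Base-2 logarithm where the argument is clamped below by 2. -/
noncomputable def log2c (z : ℝ) : ℝ := Real.logb 2 (max z 2)

/-- An operation of a set-cardinality stream over users `Fin d`: a flag
(`true` = insert, `false` = delete) together with the affected subset. -/
def CardOp (d : ℕ) : Type := Bool × Finset (Fin d)

instance {d : ℕ} : MeasurableSpace (CardOp d) := ⊤

/-- Apply a set-cardinality operation to the maintained set. -/
def CardOp.apply {d : ℕ} (D : Finset (Fin d)) (op : CardOp d) : Finset (Fin d) :=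
  if op.1 then D ∪ op.2 else D \ op.2

/-- The maintained set after the first `n` operations of an infinite stream. -/
def DcardN {d : ℕ} (x : ℕ → CardOp d) : ℕ → Finset (Fin d)
  | 0 => ∅
  | n + 1 => CardOp.apply (DcardN x n) (x n)

/-- The maintained set `D_t` after the first `t+1` operations of a finite
stream (time steps 0-indexed). -/
def Dcard {d T : ℕ} (x : Fin T → CardOp d) (t : Fin T) : Finset (Fin d) :=
  DcardN (fun n => if h : n < T then x ⟨n, h⟩ else ((true, ∅) : CardOp d)) (t.1 + 1)

/-- The total update count of a finite stream: the total number of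
(element, time step) pairs such that the element is inserted or deleted at
that time step. -/
def updateCount {d T : ℕ} (x : Fin T → CardOp d) : ℕ :=
  ∑ t : Fin T, (x t).2.card

/-- Two streams are user-level neighboring if removing some single user from
every operation of both streams yields identical streams. -/
def UserNeighboring {d T : ℕ} (x y : Fin T → CardOp d) : Prop :=
  ∃ i : Fin d, ∀ t : Fin T,
    (x t).1 = (y t).1 ∧ (x t).2.erase i = (y t).2.erase i

/-- A continual-observation set-cardinality mechanism: a measurable assignment
of output distributions to input streams whose outputs up to time `t` depend
only on the first `t` operations. -/
def IsCOMech {d T : ℕ} (M : (Fin T → CardOp d) → Measure (Fin T → ℝ)) : Prop :=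
  Measurable M ∧ (∀ x, IsProbabilityMeasure (M x)) ∧
    ∀ (t : Fin T) (x y : Fin T → CardOp d), (∀ s, s ≤ t → x s = y s) →
      (M x).map (fun a (s : {s : Fin T // s ≤ t}) => a s.1) =
      (M y).map (fun a (s : {s : Fin T // s ≤ t}) => a s.1)

/-- `ε`-differential privacy at user level. -/
def IsUserDP {d T : ℕ} (ε : ℝ)
    (M : (Fin T → CardOp d) → Measure (Fin T → ℝ)) : Prop :=
  ∀ x y, UserNeighboring x y → ∀ S : Set (Fin T → ℝ), MeasurableSet S →
    M x S ≤ ENNReal.ofReal (Real.exp ε) * M y S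

open scoped ENNReal

section DiscreteLaplace

variable {q : ℝ≥0∞}

lemma tsum_pow_natAbs_ne_top (hq : q < 1) : ∑' z : ℤ, q ^ z.natAbs ≠ ∞ := by
  rw [tsum_of_nat_of_neg_add_one ENNReal.summable ENNReal.summable]
  have hinv : (1 - q)⁻¹ ≠ ∞ := ENNReal.inv_ne_top.2 (tsub_pos_of_lt hq).ne'
  have hneg : ∀ n : ℕ, (-((n : ℤ) + 1)).natAbs = n + 1 := fun n => by omega
  simp only [Int.natAbs_natCast, hneg, ENNReal.tsum_geometric, ENNReal.tsum_geometric_add_one]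
  exact ENNReal.add_ne_top.2 ⟨hinv, ENNReal.mul_ne_top (hq.trans ENNReal.one_lt_top).ne hinv⟩

lemma tsum_pow_natAbs_ne_zero : ∑' z : ℤ, q ^ z.natAbs ≠ 0 :=
  ne_of_gt <| lt_of_lt_of_le (by simp) (ENNReal.le_tsum (f := fun z : ℤ => q ^ z.natAbs) 0)

noncomputable def discreteLaplace (q : ℝ≥0∞) (hq : q < 1) : PMF ℤ :=
  PMF.normalize (fun z => q ^ z.natAbs) tsum_pow_natAbs_ne_zero (tsum_pow_natAbs_ne_top hq)

variable (hq : q < 1)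

lemma discreteLaplace_apply (z : ℤ) :
    discreteLaplace q hq z = q ^ z.natAbs * (∑' w : ℤ, q ^ w.natAbs)⁻¹ := rfl

lemma discreteLaplace_add_of_natAbs_add {z w : ℤ} (h : (z + w).natAbs = z.natAbs + w.natAbs) :
    discreteLaplace q hq (z + w) = q ^ w.natAbs * discreteLaplace q hq z := by
  rw [discreteLaplace_apply, discreteLaplace_apply, h, pow_add, mul_assoc, mul_left_comm]

lemma pow_natAbs_mul_discreteLaplace_le (z w : ℤ) :
    q ^ w.natAbs * discreteLaplace q hq z ≤ discreteLaplace q hq (z + w) := by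
  rw [discreteLaplace_apply, discreteLaplace_apply, ← mul_assoc, ← pow_add, add_comm w.natAbs]
  gcongr ?_ * _
  exact pow_le_pow_right_of_le_one' hq.le (Int.natAbs_add_le z w)

/-- On the tail `p z = q ^ (B + 1) * p (z ∓ (B + 1))`, and each of the two shifted families of
masses sums to `1`. -/
lemma discreteLaplace_toMeasure_tail_le (B : ℕ) :
    (discreteLaplace q hq).toMeasure {z | B < z.natAbs} ≤ 2 * q ^ (B + 1) := by
  set p := discreteLaplace q hq
  set k : ℤ := B + 1
  have hk : k.natAbs = B + 1 := by omega
  have hpoint : ∀ z : ℤ, {z : ℤ | B < z.natAbs}.indicator p z ≤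
      q ^ (B + 1) * (p (z - k) + p (z + k)) := by
    intro z
    by_cases hz : B < z.natAbs
    · rw [Set.indicator_of_mem (show z ∈ {z : ℤ | B < z.natAbs} from hz), mul_add]
      rcases lt_or_gt_of_ne (show z ≠ 0 by omega) with hneg | hpos
      · refine le_add_left (le_of_eq ?_)
        conv_lhs => rw [show z = z + k + -k by ring]
        rw [discreteLaplace_add_of_natAbs_add hq (by omega), Int.natAbs_neg, hk]
      · refine le_add_right (le_of_eq ?_)
        conv_lhs => rw [show z = z - k + k by ring]
        rw [discreteLaplace_add_of_natAbs_add hq (by omega), hk]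
    · rw [Set.indicator_of_notMem (show z ∉ {z : ℤ | B < z.natAbs} from hz)]
      exact zero_le
  have hsub : ∑' z, p (z - k) = 1 := ((Equiv.subRight k).tsum_eq p).trans p.tsum_coe
  have hadd : ∑' z, p (z + k) = 1 := ((Equiv.addRight k).tsum_eq p).trans p.tsum_coe
  calc p.toMeasure {z | B < z.natAbs}
      = ∑' z, {z : ℤ | B < z.natAbs}.indicator p z := p.toMeasure_apply (.of_discrete)
    _ ≤ ∑' z, q ^ (B + 1) * (p (z - k) + p (z + k)) := ENNReal.tsum_le_tsum hpoint
    _ = 2 * q ^ (B + 1) := by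
        rw [ENNReal.tsum_mul_left, ENNReal.tsum_add, hsub, hadd, one_add_one_eq_two, mul_comm]

end DiscreteLaplace

section NoiseVector

variable (ι : Type*) [Fintype ι] {q : ℝ≥0∞} (hq : q < 1)

noncomputable def discreteLaplacePi : Measure (ι → ℤ) :=
  Measure.pi fun _ => (discreteLaplace q hq).toMeasure

instance : IsProbabilityMeasure (discreteLaplacePi ι hq) := by
  unfold discreteLaplacePi; infer_instance

variable {ι}

lemma pow_sum_mul_discreteLaplacePi_singleton_le (f g : ι → ℤ) :
    q ^ (∑ i, (g i).natAbs) * discreteLaplacePi ι hq {f} ≤ discreteLaplacePi ι hq {f + g} := by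
  simp only [discreteLaplacePi, Measure.pi_singleton, PMF.toMeasure_apply_singleton _ _
    (.of_discrete), ← Finset.prod_pow_eq_pow_sum, ← Finset.prod_mul_distrib, Pi.add_apply]
  exact Finset.prod_le_prod' fun i _ => pow_natAbs_mul_discreteLaplace_le hq (f i) (g i)

lemma one_sub_le_discreteLaplacePi_forall_natAbs_le (B : ℕ) :
    1 - Fintype.card ι * (2 * q ^ (B + 1)) ≤
      discreteLaplacePi ι hq {f | ∀ i, (f i).natAbs ≤ B} := by
  set good := {f : ι → ℤ | ∀ i, (f i).natAbs ≤ B}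
  have hbad : goodᶜ = ⋃ i, Function.eval i ⁻¹' {z | B < z.natAbs} := by
    ext f; simp [good]
  have hunion : discreteLaplacePi ι hq goodᶜ ≤ Fintype.card ι * (2 * q ^ (B + 1)) := by
    rw [hbad]
    refine (measure_iUnion_fintype_le _ _).trans <| (Finset.sum_le_sum fun i _ => ?_).trans_eq
      (by rw [Finset.sum_const, nsmul_eq_mul, Finset.card_univ])
    rw [discreteLaplacePi, (measurePreserving_eval _ i).measure_preimage
      MeasurableSet.of_discrete.nullMeasurableSet]
    exact discreteLaplace_toMeasure_tail_le hq B
  rw [← compl_compl good, prob_compl_eq_one_sub .of_discrete]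
  exact tsub_le_tsub_left hunion 1

end NoiseVector

section Injection

lemma measure_le_mul_measure_of_injective {α β : Type*} [MeasurableSpace α] [Countable α]
    [MeasurableSingletonClass α] [MeasurableSpace β] [Countable β] [MeasurableSingletonClass β]
    {μ : Measure α} {ν : Measure β} {φ : α → β} (hφ : Function.Injective φ) {k : ℝ≥0∞}
    (hk : ∀ a, μ {a} ≤ k * ν {φ a}) {s : Set α} {t : Set β} (hst : Set.MapsTo φ s t) :
    μ s ≤ k * ν t := by
  calc μ s = ∑' a, s.indicator (fun a => μ {a}) a :=
        (μ.tsum_indicator_apply_singleton s s.to_countable.measurableSet).symm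
    _ ≤ ∑' a, k * t.indicator (fun b => ν {b}) (φ a) := by
        refine ENNReal.tsum_le_tsum fun a => ?_
        by_cases ha : a ∈ s
        · rw [Set.indicator_of_mem ha, Set.indicator_of_mem (hst ha)]
          exact hk a
        · rw [Set.indicator_of_notMem ha]
          exact zero_le
    _ ≤ k * ∑' b, t.indicator (fun b => ν {b}) b := by
        rw [ENNReal.tsum_mul_left]
        gcongr
        exact ENNReal.tsum_comp_le_tsum_of_injective hφ _
    _ = k * ν t := by rw [ν.tsum_indicator_apply_singleton t t.to_countable.measurableSet]

end Injection

namespace SparseVector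

/-- Noise coordinates: one per query, and one threshold and one release noise per unit of the
release budget `J`. -/
abbrev NoiseIdx (T J : ℕ) : Type := Fin T ⊕ Fin J ⊕ Fin J

structure State where
  out : ℤ
  count : ℕ

variable {T J : ℕ}

def thresholdNoise (R : NoiseIdx T J → ℤ) (j : ℕ) : ℤ :=
  if h : j < J then R (.inr (.inl ⟨j, h⟩)) else 0

def releaseNoise (R : NoiseIdx T J → ℤ) (j : ℕ) : ℤ :=
  if h : j < J then R (.inr (.inr ⟨j, h⟩)) else 0

lemma natAbs_thresholdNoise_le {R : NoiseIdx T J → ℤ} {B : ℕ} (hR : ∀ i, (R i).natAbs ≤ B)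
    (j : ℕ) : (thresholdNoise R j).natAbs ≤ B := by
  unfold thresholdNoise; split_ifs <;> simp [hR]

lemma natAbs_releaseNoise_le {R : NoiseIdx T J → ℤ} {B : ℕ} (hR : ∀ i, (R i).natAbs ≤ B)
    (j : ℕ) : (releaseNoise R j).natAbs ≤ B := by
  unfold releaseNoise; split_ifs <;> simp [hR]

section Run

variable (r : ℕ) (n : ℕ → ℤ) (R : NoiseIdx T J → ℤ)

def Releases (t : Fin T) (s : State) : Prop :=
  s.count < J ∧ (r : ℤ) + thresholdNoise R s.count ≤ (n (t + 1) - s.out).natAbs + R (.inl t)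

instance (t : Fin T) (s : State) : Decidable (Releases r n R t s) := by
  unfold Releases; infer_instance

def step (t : Fin T) (s : State) : State :=
  if Releases r n R t s then ⟨n (t + 1) + releaseNoise R s.count, s.count + 1⟩ else s

def run : ℕ → State
  | 0 => ⟨0, 0⟩
  | t + 1 => if h : t < T then step r n R ⟨t, h⟩ (run t) else run t

def Fires (s : ℕ → State) (t : ℕ) : Prop := (s (t + 1)).count = (s t).count + 1

instance (s : ℕ → State) (t : ℕ) : Decidable (Fires s t) := by unfold Fires; infer_instance

variable {r n R} {t : ℕ}

lemma run_succ_of_lt (ht : t < T) : run r n R (t + 1) = step r n R ⟨t, ht⟩ (run r n R t) :=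
  dif_pos ht

lemma run_succ_of_le (ht : T ≤ t) : run r n R (t + 1) = run r n R t :=
  dif_neg (by omega)

lemma fires_run_iff (ht : t < T) :
    Fires (run r n R) t ↔ Releases r n R ⟨t, ht⟩ (run r n R t) := by
  unfold Fires
  rw [run_succ_of_lt ht, step]
  split_ifs with h <;> simp [h]

lemma run_succ_of_not_fires (h : ¬ Fires (run r n R) t) : run r n R (t + 1) = run r n R t := by
  rcases lt_or_ge t T with ht | ht
  · rw [fires_run_iff ht] at h
    rw [run_succ_of_lt ht, step, if_neg h]
  · exact run_succ_of_le ht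

lemma Fires.lt (h : Fires (run r n R) t) : t < T := by
  by_contra ht
  have := congrArg State.count (run_succ_of_le (r := r) (n := n) (R := R) (not_lt.1 ht))
  unfold Fires at h
  omega

lemma Fires.count_lt (h : Fires (run r n R) t) : (run r n R t).count < J :=
  ((fires_run_iff h.lt).1 h).1

lemma count_run_succ (t : ℕ) :
    (run r n R (t + 1)).count = (run r n R t).count + if Fires (run r n R) t then 1 else 0 := by
  split_ifs with h
  · exact h
  · rw [run_succ_of_not_fires h, add_zero]

lemma monotone_count_run : Monotone fun t => (run r n R t).count :=
  monotone_nat_of_le_succ fun t => by simp only [count_run_succ t]; omega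

lemma count_run_le_self (t : ℕ) : (run r n R t).count ≤ t := by
  induction t with
  | zero => rfl
  | succ t ih => rw [count_run_succ]; split_ifs <;> omega

lemma count_run_le (t : ℕ) : (run r n R t).count ≤ J := by
  induction t with
  | zero => exact Nat.zero_le J
  | succ t ih =>
    rw [count_run_succ]
    split_ifs with h
    · exact h.count_lt
    · simpa using ih

lemma eq_of_fires_of_count_eq {u : ℕ} (ht : Fires (run r n R) t) (hu : Fires (run r n R) u)
    (h : (run r n R t).count = (run r n R u).count) : t = u := by
  by_contra hne
  unfold Fires at ht hu
  rcases lt_or_gt_of_ne hne with htu | hut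
  · have : (run r n R (t + 1)).count ≤ (run r n R u).count := monotone_count_run htu
    omega
  · have : (run r n R (u + 1)).count ≤ (run r n R t).count := monotone_count_run hut
    omega

lemma sum_fires_eq_count (u : ℕ) :
    ∑ t ∈ Finset.range u, (if Fires (run r n R) t then 1 else 0) = (run r n R u).count := by
  induction u with
  | zero => rfl
  | succ u ih => rw [Finset.sum_range_succ, ih, count_run_succ]

lemma run_eq_of_eqOn {n' : ℕ → ℤ} {w : ℕ} (h : ∀ k ≤ w, n k = n' k) :
    run r n R w = run r n' R w := by
  induction w with
  | zero => rfl
  | succ w ih =>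
    rcases lt_or_ge w T with hw | hw
    · rw [run_succ_of_lt hw, run_succ_of_lt hw, ih fun k hk => h k (by omega)]
      simp only [step, Releases, h (w + 1) le_rfl]
    · rw [run_succ_of_le hw, run_succ_of_le hw, ih fun k hk => h k (by omega)]

end Run

section Coupling

/-- The correction of the `j`-th release: the difference of the two count sequences at the time
of the `j`-th firing of `s`, and `0` if there is none. -/
def releaseShift (T : ℕ) (n n' : ℕ → ℤ) (s : ℕ → State) (j : ℕ) : ℤ :=
  ∑ t ∈ Finset.range T, if Fires s t ∧ (s t).count = j then n (t + 1) - n' (t + 1) else 0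

/-- The noise shift under which the run on `n'` replays the run `s` on `n`. -/
def shift (n n' : ℕ → ℤ) (s : ℕ → State) : NoiseIdx T J → ℤ
  | .inl t => if Fires s t then 2 else 0
  | .inr (.inl _) => 1
  | .inr (.inr j) => releaseShift T n n' s j

variable {r : ℕ} {n n' : ℕ → ℤ} {R : NoiseIdx T J → ℤ}

lemma thresholdNoise_add_shift {s : ℕ → State} {j : ℕ} (hj : j < J) :
    thresholdNoise (R + shift n n' s) j = thresholdNoise R j + 1 := by
  simp [thresholdNoise, hj, shift]

lemma releaseNoise_add_shift {s : ℕ → State} {j : ℕ} (hj : j < J) :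
    releaseNoise (R + shift n n' s) j = releaseNoise R j + releaseShift T n n' s j := by
  simp [releaseNoise, hj, shift]

lemma releaseShift_run_of_fires {t : ℕ} (ht : Fires (run r n R) t) :
    releaseShift T n n' (run r n R) (run r n R t).count = n (t + 1) - n' (t + 1) := by
  rw [releaseShift, Finset.sum_eq_single_of_mem t (Finset.mem_range.2 ht.lt), if_pos ⟨ht, rfl⟩]
  intro u _ hut
  rw [if_neg]
  rintro ⟨hu, hcount⟩
  exact hut (eq_of_fires_of_count_eq hu ht hcount)

variable (hn : ∀ u, (n u - n' u).natAbs ≤ 1)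
include hn

lemma natAbs_releaseShift_run_le (j : ℕ) : (releaseShift T n n' (run r n R) j).natAbs ≤ 1 := by
  by_cases hj : ∃ t, Fires (run r n R) t ∧ (run r n R t).count = j
  · obtain ⟨t, ht, rfl⟩ := hj
    rw [releaseShift_run_of_fires ht]
    exact hn (t + 1)
  · rw [releaseShift, Finset.sum_eq_zero fun t _ => if_neg fun h => hj ⟨t, h⟩]
    exact zero_le_one

/-- A firing query gains `2` against a threshold raised by `1`, which covers a count difference
of `1`; a silent query gains nothing, so the raised threshold still silences it. -/
lemma run_add_shift : run r n' (R + shift n n' (run r n R)) = run r n R := by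
  funext t
  induction t with
  | zero => rfl
  | succ t ih =>
    rcases lt_or_ge t T with ht | ht
    · rw [run_succ_of_lt ht, run_succ_of_lt ht, ih]
      have hquery : (R + shift n n' (run r n R) : NoiseIdx T J → ℤ) (.inl ⟨t, ht⟩) =
          R (.inl ⟨t, ht⟩) + if Fires (run r n R) t then 2 else 0 := rfl
      have hnt := hn (t + 1)
      by_cases hrel : Releases r n R ⟨t, ht⟩ (run r n R t)
      · have hfires := (fires_run_iff ht).2 hrel
        obtain ⟨hcount, hcond⟩ := hrel
        have hrel' : Releases r n' (R + shift n n' (run r n R)) ⟨t, ht⟩ (run r n R t) := by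
          refine ⟨hcount, ?_⟩
          rw [thresholdNoise_add_shift hcount, hquery, if_pos hfires]
          dsimp only at hcond ⊢
          omega
        rw [step, if_pos hrel', step, if_pos ⟨hcount, hcond⟩, releaseNoise_add_shift hcount,
          releaseShift_run_of_fires hfires]
        congr 1
        ring
      · have hfires : ¬ Fires (run r n R) t := fun h => hrel ((fires_run_iff ht).1 h)
        have hrel' : ¬ Releases r n' (R + shift n n' (run r n R)) ⟨t, ht⟩ (run r n R t) := by
          rintro ⟨hcount, hcond⟩
          rw [thresholdNoise_add_shift hcount, hquery, if_neg hfires] at hcond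
          dsimp only at hcond
          exact hrel ⟨hcount, by dsimp only; omega⟩
        rw [step, if_neg hrel', step, if_neg hrel]
    · rw [run_succ_of_le ht, run_succ_of_le ht, ih]

lemma add_shift_injective :
    Function.Injective fun R : NoiseIdx T J → ℤ => R + shift n n' (run r n R) := by
  intro R₁ R₂ h
  have hrun : run r n R₁ = run r n R₂ := by
    rw [← run_add_shift (R := R₁) hn, ← run_add_shift (R := R₂) hn]
    exact congrArg (run r n') h
  simp only [hrun] at h
  exact add_right_cancel h

/-- The shift costs `2` per firing query, `1` per threshold and at most `1` per release. -/
lemma sum_natAbs_shift_run_le :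
    ∑ i : NoiseIdx T J, (shift n n' (run r n R) i).natAbs ≤ 4 * J := by
  have hquery : ∑ t : Fin T, (shift (J := J) n n' (run r n R) (.inl t)).natAbs ≤ 2 * J := by
    calc ∑ t : Fin T, (shift (J := J) n n' (run r n R) (.inl t)).natAbs
        = ∑ t ∈ Finset.range T, 2 * if Fires (run r n R) t then 1 else 0 := by
          rw [← Fin.sum_univ_eq_sum_range (fun t => 2 * if Fires (run r n R) t then 1 else 0)]
          refine Finset.sum_congr rfl fun t _ => ?_
          simp only [shift]
          split_ifs <;> rfl
      _ ≤ 2 * J := by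
          rw [← Finset.mul_sum, sum_fires_eq_count]
          exact Nat.mul_le_mul_left 2 (count_run_le T)
  have hrelease : ∑ j : Fin J, (shift (T := T) n n' (run r n R) (.inr (.inr j))).natAbs ≤ J :=
    calc _ ≤ ∑ _j : Fin J, 1 := Finset.sum_le_sum fun j _ => natAbs_releaseShift_run_le hn j
      _ = J := by simp
  have hthreshold :
      ∑ j : Fin J, (shift (T := T) n n' (run r n R) (.inr (.inl j))).natAbs = J := by
    simp [shift]
  rw [Fintype.sum_sum_type, Fintype.sum_sum_type]
  omega

end Coupling

section Accuracy

def totalVariation (n : ℕ → ℤ) (w : ℕ) : ℕ :=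
  ∑ k ∈ Finset.range w, (n (k + 1) - n k).natAbs

lemma totalVariation_add_natAbs_sub_le (n : ℕ → ℤ) {u w : ℕ} (h : u ≤ w) :
    totalVariation n u + (n w - n u).natAbs ≤ totalVariation n w := by
  induction w, h using Nat.le_induction with
  | base => simp
  | succ w _ ih =>
    simp only [totalVariation, Finset.sum_range_succ] at ih ⊢
    omega

variable {r B : ℕ} {n : ℕ → ℤ} {R : NoiseIdx T J → ℤ}

/-- Each firing happens only after the count has moved by at least `r - 3 * B` since the
previous release. -/
lemma exists_natAbs_out_sub_le (hR : ∀ i, (R i).natAbs ≤ B) (hB : 3 * B ≤ r) (hn0 : n 0 = 0)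
    (t : ℕ) : ∃ u ≤ t, ((run r n R t).out - n u).natAbs ≤ B ∧
      (run r n R t).count * (r - 3 * B) ≤ totalVariation n u := by
  induction t with
  | zero => exact ⟨0, le_rfl, by simp [run, hn0], by simp [run]⟩
  | succ t ih =>
    obtain ⟨u, hut, hout, hcount⟩ := ih
    by_cases hfires : Fires (run r n R) t
    · have ht := hfires.lt
      obtain ⟨hJ, hcond⟩ := (fires_run_iff ht).1 hfires
      have hstep : run r n R (t + 1) =
          ⟨n (t + 1) + releaseNoise R (run r n R t).count, (run r n R t).count + 1⟩ := by
        rw [run_succ_of_lt ht, step, if_pos ⟨hJ, hcond⟩]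
      have hthr := natAbs_thresholdNoise_le hR (run r n R t).count
      have hrel := natAbs_releaseNoise_le hR (run r n R t).count
      have hquery := hR (.inl ⟨t, ht⟩)
      have htv := totalVariation_add_natAbs_sub_le n (show u ≤ t + 1 by omega)
      dsimp only at hcond
      refine ⟨t + 1, le_rfl, ?_, ?_⟩
      · rw [hstep]; dsimp only; omega
      · rw [hstep]; dsimp only
        rw [add_mul, one_mul]
        omega
    · rw [run_succ_of_not_fires hfires]
      exact ⟨u, by omega, hout, hcount⟩

/-- The budget hypothesis rules out exhausting the budget before time `T`. -/
lemma natAbs_out_sub_lt (hR : ∀ i, (R i).natAbs ≤ B) (hr : 0 < r) (hB : 3 * B ≤ r)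
    (hn0 : n 0 = 0) (hbudget : totalVariation n T < J * (r - 3 * B) ∨ T ≤ J) {t : ℕ}
    (ht : t < T) : ((run r n R (t + 1)).out - n (t + 1)).natAbs < r + 2 * B := by
  rw [run_succ_of_lt ht, step]
  split_ifs with hrel
  · simpa using (natAbs_releaseNoise_le hR _).trans_lt (by omega)
  · have hquery := hR (.inl ⟨t, ht⟩)
    by_cases hJ : (run r n R t).count < J
    · have hthr := natAbs_thresholdNoise_le hR (run r n R t).count
      simp only [Releases, not_and, not_le] at hrel
      have := hrel hJ
      omega
    · exfalso
      have hcount : (run r n R t).count = J := le_antisymm (count_run_le t) (not_lt.1 hJ)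
      obtain ⟨u, hut, -, hTV⟩ := exists_natAbs_out_sub_le hR hB hn0 t
      have hTVu := totalVariation_add_natAbs_sub_le n (show u ≤ T by omega)
      have := count_run_le_self (r := r) (n := n) (R := R) t
      rw [hcount] at hTV
      omega

end Accuracy

end SparseVector

section SetCardinality

variable {d T : ℕ}

/-- The padding of the stream used in `Dcard`. -/
def padStream (x : Fin T → CardOp d) : ℕ → CardOp d :=
  fun n => if h : n < T then x ⟨n, h⟩ else ((true, ∅) : CardOp d)

lemma padStream_of_lt (x : Fin T → CardOp d) {k : ℕ} (hk : k < T) :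
    padStream x k = x ⟨k, hk⟩ :=
  dif_pos hk

lemma padStream_of_le (x : Fin T → CardOp d) {k : ℕ} (hk : T ≤ k) :
    padStream x k = ((true, ∅) : CardOp d) :=
  dif_neg (by omega)

def cardSeq (x : Fin T → CardOp d) (u : ℕ) : ℤ := (DcardN (padStream x) u).card

lemma card_Dcard (x : Fin T → CardOp d) (t : Fin T) :
    ((Dcard x t).card : ℤ) = cardSeq x (t + 1) := rfl

lemma cardSeq_zero (x : Fin T → CardOp d) : cardSeq x 0 = 0 := rfl

lemma CardOp.erase_apply (D : Finset (Fin d)) (op : CardOp d) (i : Fin d) :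
    (CardOp.apply D op).erase i = CardOp.apply (D.erase i) (op.1, op.2.erase i) := by
  unfold CardOp.apply
  split_ifs <;> simp [Finset.erase_union_distrib, Finset.erase_sdiff_distrib]

lemma natAbs_card_sub_card_le_one_of_erase_eq {α : Type*} [DecidableEq α] {A B : Finset α}
    {i : α} (h : A.erase i = B.erase i) : ((A.card : ℤ) - B.card).natAbs ≤ 1 := by
  have hA := Finset.pred_card_le_card_erase (s := A) (a := i)
  have hA' := Finset.card_erase_le (s := A) (a := i)
  have hB := Finset.pred_card_le_card_erase (s := B) (a := i)
  have hB' := Finset.card_erase_le (s := B) (a := i)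
  rw [h] at hA hA'
  omega

lemma natAbs_cardSeq_sub_le_one {x y : Fin T → CardOp d} (hxy : UserNeighboring x y) (u : ℕ) :
    (cardSeq x u - cardSeq y u).natAbs ≤ 1 := by
  obtain ⟨i, hi⟩ := hxy
  have hpad : ∀ k, (padStream x k).1 = (padStream y k).1 ∧
      (padStream x k).2.erase i = (padStream y k).2.erase i := by
    intro k
    rcases lt_or_ge k T with hk | hk
    · rw [padStream_of_lt x hk, padStream_of_lt y hk]
      exact hi _
    · rw [padStream_of_le x hk, padStream_of_le y hk]
      exact ⟨rfl, rfl⟩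
  have herase : ∀ u, (DcardN (padStream x) u).erase i = (DcardN (padStream y) u).erase i := by
    intro u
    induction u with
    | zero => rfl
    | succ u ih =>
      simp only [DcardN, CardOp.erase_apply, ih, (hpad u).1, (hpad u).2]
  exact natAbs_card_sub_card_le_one_of_erase_eq (herase u)

lemma natAbs_card_apply_sub_card_le (D : Finset (Fin d)) (op : CardOp d) :
    (((CardOp.apply D op).card : ℤ) - D.card).natAbs ≤ op.2.card := by
  unfold CardOp.apply
  split_ifs
  · have := Finset.card_union_le D op.2
    have := Finset.card_le_card (Finset.subset_union_left (s₁ := D) (s₂ := op.2))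
    omega
  · have := Finset.card_sdiff_add_card_inter D op.2
    have := Finset.card_le_card (Finset.inter_subset_right (s₁ := D) (s₂ := op.2))
    have := Finset.card_le_card (Finset.sdiff_subset (s := D) (t := op.2))
    omega

lemma totalVariation_cardSeq_le (x : Fin T → CardOp d) :
    SparseVector.totalVariation (cardSeq x) T ≤ updateCount x := by
  rw [SparseVector.totalVariation, updateCount, Finset.sum_range]
  refine Finset.sum_le_sum fun t _ => ?_
  rw [show x t = padStream x t from (padStream_of_lt x t.2).symm]
  exact natAbs_card_apply_sub_card_le (DcardN (padStream x) t) (padStream x t)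

lemma card_Dcard_le (x : Fin T → CardOp d) (t : Fin T) :
    (Dcard x t).card ≤ min d (updateCount x) := by
  refine le_min ((Finset.card_le_univ _).trans_eq (Fintype.card_fin d)) ?_
  have h := SparseVector.totalVariation_add_natAbs_sub_le (cardSeq x) (Nat.zero_le (t + 1))
  have h' := SparseVector.totalVariation_add_natAbs_sub_le (cardSeq x) (show t + 1 ≤ T from t.2)
  have := totalVariation_cardSeq_le x
  rw [cardSeq_zero, sub_zero, ← card_Dcard] at h
  omega

lemma cardSeq_eq_of_prefix {x y : Fin T → CardOp d} {t : Fin T}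
    (h : ∀ s ≤ t, x s = y s) : ∀ u ≤ t.1 + 1, cardSeq x u = cardSeq y u := by
  intro u hu
  suffices DcardN (padStream x) u = DcardN (padStream y) u by rw [cardSeq, cardSeq, this]
  induction u with
  | zero => rfl
  | succ u ih =>
    have hu' : u < T := by omega
    simp only [DcardN, ih (by omega), padStream_of_lt _ hu',
      h ⟨u, hu'⟩ (Fin.mk_le_mk.2 (by omega))]

end SetCardinality

section Mechanisms

open SparseVector

variable {d T : ℕ}

instance : Countable (CardOp d) := inferInstanceAs (Countable (Bool × Finset (Fin d)))

instance : MeasurableSingletonClass (CardOp d) := ⟨fun _ => MeasurableSpace.measurableSet_top⟩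

def svtOutput (J r : ℕ) (x : Fin T → CardOp d) (R : NoiseIdx T J → ℤ) : Fin T → ℝ :=
  fun t => (run r (cardSeq x) R (t + 1)).out

noncomputable def svtMech (J r : ℕ) {q : ℝ≥0∞} (hq : q < 1) (x : Fin T → CardOp d) :
    Measure (Fin T → ℝ) :=
  (discreteLaplacePi (NoiseIdx T J) hq).map (svtOutput J r x)

variable {J r : ℕ} {q : ℝ≥0∞} (hq : q < 1)

lemma svtMech_apply (x : Fin T → CardOp d) {S : Set (Fin T → ℝ)} (hS : MeasurableSet S) :
    svtMech J r hq x S = discreteLaplacePi (NoiseIdx T J) hq (svtOutput J r x ⁻¹' S) :=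
  Measure.map_apply (measurable_of_countable _) hS

lemma svtMech_isCOMech : IsCOMech (svtMech (d := d) (T := T) J r hq) := by
  refine ⟨measurable_of_countable _,
    fun x => Measure.isProbabilityMeasure_map (measurable_of_countable _).aemeasurable, ?_⟩
  intro t x y hxy
  rw [svtMech, svtMech, Measure.map_map (by fun_prop) (measurable_of_countable _),
    Measure.map_map (by fun_prop) (measurable_of_countable _)]
  congr 1
  funext R s
  simp only [Function.comp_apply, svtOutput]
  rw [run_eq_of_eqOn fun k hk => cardSeq_eq_of_prefix hxy k (by have := s.2; omega)]

lemma le_ofReal_exp_mul_of_ofReal_exp_neg_mul_le {ε : ℝ} {a b : ℝ≥0∞}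
    (h : ENNReal.ofReal (Real.exp (-ε)) * a ≤ b) : a ≤ ENNReal.ofReal (Real.exp ε) * b := by
  calc a = ENNReal.ofReal (Real.exp ε) * (ENNReal.ofReal (Real.exp (-ε)) * a) := by
        rw [← mul_assoc, ← ENNReal.ofReal_mul (Real.exp_nonneg _), ← Real.exp_add, add_neg_cancel,
          Real.exp_zero, ENNReal.ofReal_one, one_mul]
    _ ≤ ENNReal.ofReal (Real.exp ε) * b := by gcongr

lemma svtOutput_add_shift {x y : Fin T → CardOp d}
    (hn : ∀ u, (cardSeq x u - cardSeq y u).natAbs ≤ 1) (R : NoiseIdx T J → ℤ) :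
    svtOutput J r y (R + shift (cardSeq x) (cardSeq y) (run r (cardSeq x) R)) =
      svtOutput J r x R := by
  unfold svtOutput
  rw [run_add_shift hn]

lemma svtMech_isUserDP {ε : ℝ} (hε : ENNReal.ofReal (Real.exp (-ε)) ≤ q ^ (4 * J)) :
    IsUserDP ε (svtMech (d := d) (T := T) J r hq) := by
  intro x y hxy S hS
  have hn := natAbs_cardSeq_sub_le_one hxy
  rw [svtMech_apply hq x hS, svtMech_apply hq y hS]
  refine measure_le_mul_measure_of_injective (add_shift_injective (r := r) hn) (fun R => ?_) ?_
  · apply le_ofReal_exp_mul_of_ofReal_exp_neg_mul_le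
    calc ENNReal.ofReal (Real.exp (-ε)) * discreteLaplacePi (NoiseIdx T J) hq {R}
        ≤ q ^ (∑ i, (shift (cardSeq x) (cardSeq y) (run r (cardSeq x) R) i).natAbs) *
            discreteLaplacePi (NoiseIdx T J) hq {R} := by
          gcongr
          exact hε.trans (pow_le_pow_right_of_le_one' hq.le (sum_natAbs_shift_run_le hn))
      _ ≤ _ := pow_sum_mul_discreteLaplacePi_singleton_le hq _ _
  · intro R hR
    rwa [Set.mem_preimage, svtOutput_add_shift hn]

lemma svtMech_accurate {B K : ℕ} (hr : 0 < r) (hB : 6 * B ≤ r)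
    (hbudget : 2 * K < J * r ∨ T ≤ J) {x : Fin T → CardOp d} (hx : updateCount x ≤ K) :
    1 - ((T + 2 * J : ℕ) : ℝ≥0∞) * (2 * q ^ (B + 1)) ≤
      svtMech J r hq x {a | ∀ t, |a t - ((Dcard x t).card : ℝ)| ≤ r + 2 * B - 1} := by
  have hcard : Fintype.card (NoiseIdx T J) = T + 2 * J := by simp; ring
  have hTV : totalVariation (cardSeq x) T < J * (r - 3 * B) ∨ T ≤ J := by
    have := totalVariation_cardSeq_le x
    rcases hbudget with h | h
    · left
      have : J * r ≤ 2 * (J * (r - 3 * B)) := by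
        rw [← mul_assoc, mul_comm 2 J, mul_assoc]; exact Nat.mul_le_mul_left J (by omega)
      omega
    · exact Or.inr h
  rw [← hcard]
  refine (one_sub_le_discreteLaplacePi_forall_natAbs_le hq B).trans <|
    (measure_mono fun R hR t => ?_).trans
      (Measure.le_map_apply (measurable_of_countable _).aemeasurable _)
  have h := natAbs_out_sub_lt hR hr (by omega) (cardSeq_zero x) hTV t.2
  have hcast : ((Dcard x t).card : ℝ) = (cardSeq x (t + 1) : ℤ) := by
    exact_mod_cast card_Dcard x t
  have hlt : (((run r (cardSeq x) R (t + 1)).out - cardSeq x (t + 1)).natAbs : ℝ) + 1 ≤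
      r + 2 * B := by
    exact_mod_cast h
  rw [svtOutput, hcast, ← Int.cast_sub, ← Int.cast_abs, ← Nat.cast_natAbs]
  linarith

end Mechanisms

section ConstantMechanism

variable {d T : ℕ} (μ : Measure (Fin T → ℝ))

lemma isCOMech_const [IsProbabilityMeasure μ] : IsCOMech fun _ : Fin T → CardOp d => μ :=
  ⟨measurable_const, fun _ => inferInstance, fun _ _ _ _ => rfl⟩

lemma isUserDP_const {ε : ℝ} (hε : 0 ≤ ε) : IsUserDP ε fun _ : Fin T → CardOp d => μ :=
  fun _ _ _ _ _ => le_mul_of_one_le_left zero_le (by simpa using Real.one_le_exp hε)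

end ConstantMechanism

section Parameters

lemma one_le_log2c (z : ℝ) : 1 ≤ log2c z := by
  rw [log2c, Real.le_logb_iff_rpow_le one_lt_two (by positivity), Real.rpow_one]
  exact le_max_right z 2

lemma le_exp_log2c_mul_log_two (z : ℝ) : z ≤ Real.exp (Real.log 2 * log2c z) := by
  rw [← Real.rpow_def_of_pos two_pos, log2c, Real.rpow_logb two_pos (by norm_num) (by positivity)]
  exact le_max_left z 2

/-- Uses `T / β ≤ 2 ^ L` for `L = log2c (T / β) ≥ 1` and `6 * 2 ^ L * exp (-3 * L) ≤ 1`. -/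
lemma natCast_mul_two_mul_pow_le {T J B : ℕ} {β c : ℝ} (hJT : J ≤ T) (hβ : 0 < β)
    (hc : 3 * log2c (T / β) ≤ c * (B + 1)) :
    ((T + 2 * J : ℕ) : ℝ≥0∞) * (2 * ENNReal.ofReal (Real.exp (-c)) ^ (B + 1)) ≤
      ENNReal.ofReal β := by
  set L := log2c (T / β)
  have hL := one_le_log2c (T / β)
  have hT : (T : ℝ) ≤ β * Real.exp (Real.log 2 * L) := by
    have := le_exp_log2c_mul_log_two (T / β)
    rwa [div_le_iff₀ hβ, mul_comm] at this
  have hJT' : (J : ℝ) ≤ T := by exact_mod_cast hJT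
  have hexp2 : 6 ≤ Real.exp 2 := by
    rw [show (2 : ℝ) = 1 + 1 by norm_num, Real.exp_add]
    nlinarith [Real.exp_one_gt_d9]
  have hexp : 6 * Real.exp (Real.log 2 * L) * Real.exp (-(c * (B + 1))) ≤ 1 := by
    rw [mul_assoc, ← Real.exp_add]
    calc 6 * Real.exp (Real.log 2 * L + -(c * (B + 1)))
        ≤ 6 * Real.exp (-2) := by
          gcongr
          nlinarith [Real.log_two_lt_d9]
      _ ≤ 1 := by
          rw [Real.exp_neg]
          rw [mul_inv_le_iff₀ (Real.exp_pos 2)]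
          linarith
  rw [← ENNReal.ofReal_pow (Real.exp_nonneg _), ← Real.exp_nat_mul, ← ENNReal.ofReal_ofNat 2,
    ← ENNReal.ofReal_mul zero_le_two, ← ENNReal.ofReal_natCast,
    ← ENNReal.ofReal_mul (Nat.cast_nonneg _)]
  refine ENNReal.ofReal_le_ofReal ?_
  push_cast
  have hpos := Real.exp_pos (-(c * (B + 1)))
  calc ((T : ℝ) + 2 * J) * (2 * Real.exp ((B + 1) * -c))
      = ((T : ℝ) + 2 * J) * 2 * Real.exp (-(c * (B + 1))) := by ring_nf
    _ ≤ 6 * (β * Real.exp (Real.log 2 * L)) * Real.exp (-(c * (B + 1))) :=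
        mul_le_mul_of_nonneg_right (by linarith) hpos.le
    _ = β * (6 * Real.exp (Real.log 2 * L) * Real.exp (-(c * (B + 1)))) := by ring
    _ ≤ β := mul_le_of_le_one_right hβ.le hexp

lemma div_div_le_thirteen_mul_sqrt {ε K L r J : ℝ} (hε : 0 < ε) (hK : 0 < K) (hL : 0 < L)
    (hr : 100 * √(ε⁻¹ * K * L) ≤ r) (hJ : J ≤ 2 * K / r + 1) (hsK : √(ε⁻¹ * K * L) ≤ K) :
    3 * L / (ε / (4 * J)) ≤ 13 * √(ε⁻¹ * K * L) := by
  set s := √(ε⁻¹ * K * L)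
  have hs : 0 < s := Real.sqrt_pos.2 (by positivity)
  have hs2 : s ^ 2 = ε⁻¹ * K * L := Real.sq_sqrt (by positivity)
  have hr0 : 0 < r := by linarith
  calc 3 * L / (ε / (4 * J)) = 12 * L * J / ε := by rw [div_div_eq_mul_div]; ring
    _ ≤ 12 * L * (2 * K / r + 1) / ε := by gcongr
    _ = 24 * s ^ 2 / r + 12 * s ^ 2 / K := by rw [hs2]; field_simp; ring
    _ ≤ s + 12 * s := by
        gcongr
        · rw [div_le_iff₀ hr0]; nlinarith
        · rw [div_le_iff₀ hK]; nlinarith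
    _ = 13 * s := by ring

lemma natCast_min_le_div_add_one (K T r : ℕ) :
    ((min (2 * K / r + 1) T : ℕ) : ℝ) ≤ 2 * K / r + 1 := by
  have h : ((2 * K / r : ℕ) : ℝ) ≤ ((2 * K : ℕ) : ℝ) / r := Nat.cast_div_le
  push_cast at h
  exact (Nat.cast_le.2 (min_le_left _ _)).trans (by push_cast; linarith)

lemma ofReal_exp_neg_div_pow (ε : ℝ) {m : ℕ} (hm : 0 < m) :
    ENNReal.ofReal (Real.exp (-(ε / m))) ^ m = ENNReal.ofReal (Real.exp (-ε)) := by
  rw [← ENNReal.ofReal_pow (Real.exp_nonneg _), ← Real.exp_nat_mul, mul_neg,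
    mul_div_cancel₀ ε (by positivity)]

lemma two_mul_lt_min_mul_or_le (K T : ℕ) {r : ℕ} (hr : 0 < r) :
    2 * K < min (2 * K / r + 1) T * r ∨ T ≤ min (2 * K / r + 1) T := by
  rcases le_total (2 * K / r + 1) T with h | h
  · left
    rw [min_eq_left h, mul_comm _ r]
    exact Nat.lt_mul_div_succ _ hr
  · right
    rw [min_eq_right h]

end Parameters

lemma exists_svtMech_error_le {ε β : ℝ} {d K T : ℕ} (hε : 0 < ε) (hβ : 0 < β) (hT : 1 ≤ T)
    (hsK : √(ε⁻¹ * K * log2c (T / β)) < K) :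
    ∃ M : (Fin T → CardOp d) → Measure (Fin T → ℝ), IsCOMech M ∧ IsUserDP ε M ∧
      ∀ x, updateCount x ≤ K → ENNReal.ofReal (1 - β) ≤
        M x {a | ∀ t, |a t - ((Dcard x t).card : ℝ)| ≤ 126 * √(ε⁻¹ * K * log2c (T / β))} := by
  set L := log2c (T / β)
  set s := √(ε⁻¹ * K * L)
  have hL := one_le_log2c (T / β)
  have hK : (0 : ℝ) < K := (Real.sqrt_nonneg _).trans_lt hsK
  have hs : 0 < s := Real.sqrt_pos.2 (by positivity)
  set r := ⌈100 * s⌉₊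
  have hr : 0 < r := Nat.ceil_pos.2 (by positivity)
  have hr_lt : (r : ℝ) < 100 * s + 1 := Nat.ceil_lt_add_one (by positivity)
  set J := min (2 * K / r + 1) T
  have hJ : 0 < J := lt_min (Nat.succ_pos _) hT
  set c := ε / (4 * J : ℕ)
  have hc : 0 < c := by positivity
  set B := ⌊3 * L / c⌋₊
  have hB : (B : ℝ) ≤ 13 * s := (Nat.floor_le (by positivity)).trans <| by
    simp only [c]
    push_cast
    exact div_div_le_thirteen_mul_sqrt hε hK (by linarith) (Nat.le_ceil _)
      (natCast_min_le_div_add_one K T r) hsK.le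
  have htail : 3 * L ≤ c * (B + 1) := by
    have := Nat.lt_floor_add_one (3 * L / c)
    rw [div_lt_iff₀ hc] at this
    linarith
  have h6B : 6 * B ≤ r := by
    have : (6 * B : ℝ) ≤ r := by linarith [Nat.le_ceil (100 * s)]
    exact_mod_cast this
  have hq : ENNReal.ofReal (Real.exp (-c)) < 1 :=
    ENNReal.ofReal_lt_one.2 (Real.exp_lt_one_iff.2 (by linarith))
  refine ⟨svtMech J r hq, svtMech_isCOMech hq,
    svtMech_isUserDP hq (ofReal_exp_neg_div_pow ε (by omega)).ge, fun x hx => ?_⟩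
  calc ENNReal.ofReal (1 - β) = 1 - ENNReal.ofReal β := by
        rw [ENNReal.ofReal_sub _ hβ.le, ENNReal.ofReal_one]
    _ ≤ 1 - ((T + 2 * J : ℕ) : ℝ≥0∞) * (2 * ENNReal.ofReal (Real.exp (-c)) ^ (B + 1)) :=
        tsub_le_tsub_left (natCast_mul_two_mul_pow_le (min_le_right _ _) hβ htail) 1
    _ ≤ svtMech J r hq x {a | ∀ t, |a t - ((Dcard x t).card : ℝ)| ≤ r + 2 * B - 1} :=
        svtMech_accurate hq hr h6B (two_mul_lt_min_mul_or_le K T hr) hx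
    _ ≤ _ := by
        refine measure_mono fun a ha t => (ha t).trans ?_
        linarith

theorem set_cardinality_upper_bound_known_K_T :
    ∃ C : ℝ, 0 < C ∧
      ∀ (ε β : ℝ) (d K T : ℕ),
        0 < ε → β ∈ Set.Ioo (0 : ℝ) 1 → 1 ≤ d → 1 ≤ K → 1 ≤ T →
        ∃ M : (Fin T → CardOp d) → Measure (Fin T → ℝ),
          IsCOMech M ∧ IsUserDP ε M ∧
          ∀ x : Fin T → CardOp d, updateCount x ≤ K →
            ENNReal.ofReal (1 - β) ≤
              M x {a | ∀ t : Fin T, |a t - ((Dcard x t).card : ℝ)| ≤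
                C * min (d : ℝ) (min (K : ℝ)
                  (Real.sqrt (ε⁻¹ * (K : ℝ) * log2c ((T : ℝ) / β))))} := by
  refine ⟨126, by norm_num, fun ε β d K T hε hβ _ _ hT => ?_⟩
  set s := √(ε⁻¹ * K * log2c (T / β))
  rcases le_or_gt (min (d : ℝ) K) s with hsmall | hlarge
  · refine ⟨fun _ => Measure.dirac 0, isCOMech_const _, isUserDP_const _ hε.le, fun x hx => ?_⟩
    refine (ENNReal.ofReal_le_one.2 (by linarith [hβ.1])).trans_eq
      (Measure.dirac_apply_of_mem fun t => ?_).symm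
    have hcard : ((Dcard x t).card : ℝ) ≤ min (d : ℝ) K := by
      exact_mod_cast (card_Dcard_le x t).trans (min_le_min_left d hx)
    rw [← min_assoc, min_eq_left hsmall, Pi.zero_apply, zero_sub, abs_neg, Nat.abs_cast]
    linarith
  · obtain ⟨M, hM, hdp, hacc⟩ :=
      exists_svtMech_error_le (d := d) hε hβ.1 hT (hlarge.trans_le (min_le_right _ _))
    refine ⟨M, hM, hdp, fun x hx => (hacc x hx).trans (measure_mono fun a ha t => ?_)⟩
    rw [min_eq_right (hlarge.le.trans (min_le_right _ _)),
      min_eq_right (hlarge.le.trans (min_le_left _ _))]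
    exact ha t
end

section
/- Let d ≥ 1 be an integer, q ∈ (0,1], α ≥ 0, and let s, c ∈ ℝ^d satisfy max_{i ≤ d} |s_i − c_i| ≤ α. Then |Q_q(s) − Q_q(c)| ≤ α, where Q_q(c) denotes the q-quantile of the vector c. -/
/-!
The quantile of `c` is attained at a coordinate `c j` whose lower set `{i | c i ≤ c j}` has at
least `p·d` elements. If `s ≤ c + α` coordinatewise, let `k` maximise `s` on that lower set: then
the lower set of `s k` contains it, so `quantile p s ≤ s k ≤ c k + α ≤ c j + α`. Exchanging the
roles of `s` and `c` gives the other inequality.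
-/

/-- The `p`-quantile of a vector `c ∈ ℝ^d`: the smallest value `c j` such that
at least `p·d` of the coordinates of `c` are `≤ c j`. -/
noncomputable def quantile {d : ℕ} (p : ℝ) (c : Fin d → ℝ) : ℝ :=
  sInf {z : ℝ | ∃ j : Fin d, z = c j ∧ p * d ≤ ({i : Fin d | c i ≤ c j}.ncard : ℝ)}

section

variable {d : ℕ} {p : ℝ}

lemma quantile_candidates_finite (c : Fin d → ℝ) :
    {z : ℝ | ∃ j : Fin d, z = c j ∧ p * d ≤ ({i | c i ≤ c j}.ncard : ℝ)}.Finite := by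
  refine (Set.finite_range c).subset ?_
  rintro _ ⟨j, rfl, -⟩
  exact ⟨j, rfl⟩

lemma quantile_le_of_le_ncard {c : Fin d → ℝ} {k : Fin d}
    (hk : p * d ≤ ({i | c i ≤ c k}.ncard : ℝ)) : quantile p c ≤ c k :=
  csInf_le (quantile_candidates_finite c).bddBelow ⟨k, rfl, hk⟩

lemma exists_quantile_eq (hd : 1 ≤ d) (hp : p ≤ 1) (c : Fin d → ℝ) :
    ∃ j, quantile p c = c j ∧ p * d ≤ ({i | c i ≤ c j}.ncard : ℝ) := by
  have : Nonempty (Fin d) := ⟨⟨0, hd⟩⟩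
  obtain ⟨m, hm⟩ := Finite.exists_max c
  have hne : {z : ℝ | ∃ j : Fin d, z = c j ∧ p * d ≤ ({i | c i ≤ c j}.ncard : ℝ)}.Nonempty := by
    refine ⟨c m, m, rfl, ?_⟩
    have hall : {i | c i ≤ c m} = Set.univ := Set.eq_univ_of_forall hm
    rw [hall, Set.ncard_univ, Nat.card_eq_fintype_card, Fintype.card_fin]
    exact mul_le_of_le_one_left d.cast_nonneg hp
  exact hne.csInf_mem (quantile_candidates_finite c)

lemma quantile_le_add (hd : 1 ≤ d) (hp : p ≤ 1) {α : ℝ} {s c : Fin d → ℝ}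
    (h : ∀ i, s i ≤ c i + α) : quantile p s ≤ quantile p c + α := by
  obtain ⟨j, hj, hcard⟩ := exists_quantile_eq hd hp c
  obtain ⟨k, hkj, hk⟩ :=
    Set.exists_max_image {i | c i ≤ c j} s (Set.toFinite _) ⟨j, le_refl (c j)⟩
  have hcard' : p * d ≤ ({i | s i ≤ s k}.ncard : ℝ) :=
    hcard.trans (by exact_mod_cast Set.ncard_le_ncard hk)
  calc quantile p s ≤ s k := quantile_le_of_le_ncard hcard'
    _ ≤ c k + α := h k
    _ ≤ quantile p c + α := by rw [hj]; exact add_le_add_left hkj α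

end

theorem quantile_sensitivity_general {d : ℕ} (hd : 1 ≤ d) (p : ℝ)
    (hp : p ∈ Set.Ioc (0 : ℝ) 1) (α : ℝ) (s c : Fin d → ℝ)
    (h : ∀ i, |s i - c i| ≤ α) :
    |quantile p s - quantile p c| ≤ α := by
  have hsc : quantile p s ≤ quantile p c + α :=
    quantile_le_add hd hp.2 fun i => by linarith [(abs_le.mp (h i)).2]
  have hcs : quantile p c ≤ quantile p s + α :=
    quantile_le_add hd hp.2 fun i => by linarith [(abs_le.mp (h i)).1]
  exact abs_sub_le_iff.mpr ⟨by linarith, by linarith⟩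

theorem quantile_sensitivity {d : ℕ} (hd : 1 ≤ d) (p : ℝ)
    (hp : p ∈ Set.Ioc (0 : ℝ) 1) (α : ℝ) (hα : 0 ≤ α) (s c : Fin d → ℝ)
    (h : ∀ i, |s i - c i| ≤ α) :
    |quantile p s - quantile p c| ≤ α :=
  quantile_sensitivity_general hd p hp α s c h
end
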